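/- Let K be a field and c ∈ ℤⁿ with c⁺ ≠ 0 and c⁻ ≠ 0. Let I ⊆ S = K[x₁,…,xₙ] be an ideal homogeneous with respect to the ℤⁿ/ℤc-grading, let ≺ and ≺' be term orders with x^{c⁺} ≺ x^{c⁻} and x^{c⁺} ≻' x^{c⁻}, and set M = in_≺(I), N = in_{≺'}(I). If for some index i and some integer r ≥ 1 the monomial x_i^r lies in both M and N, then x_i^r ∈ I. -/

import Mathlib

open MvPolynomial

/-- A term order on the monomial exponents of `K[x₁,…,xₙ]`: a strict total order on
`Fin n →₀ ℕ` with `0` smallest and compatible with addition. -/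
def IsTermOrder (n : ℕ) (lt : (Fin n →₀ ℕ) → (Fin n →₀ ℕ) → Prop) : Prop :=
  (∀ u v : Fin n →₀ ℕ, lt u v ∨ u = v ∨ lt v u) ∧
  (∀ u v w : Fin n →₀ ℕ, lt u v → lt v w → lt u w) ∧
  (∀ u : Fin n →₀ ℕ, ¬ lt u u) ∧
  (∀ u : Fin n →₀ ℕ, u ≠ 0 → lt 0 u) ∧
  (∀ u v w : Fin n →₀ ℕ, lt u v → lt (u + w) (v + w))

/-- `u` is the exponent of the `lt`-leading monomial `in_≺(f)` of `f`. -/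
def IsLeadExp {n : ℕ} {K : Type*} [Field K] (lt : (Fin n →₀ ℕ) → (Fin n →₀ ℕ) → Prop)
    (f : MvPolynomial (Fin n) K) (u : Fin n →₀ ℕ) : Prop :=
  u ∈ f.support ∧ ∀ v ∈ f.support, v ≠ u → lt v u

/-- The initial ideal `in_≺(I)`, generated by the leading monomials of nonzero elements. -/
noncomputable def initialIdeal {n : ℕ} {K : Type*} [Field K]
    (lt : (Fin n →₀ ℕ) → (Fin n →₀ ℕ) → Prop) (I : Ideal (MvPolynomial (Fin n) K)) :
    Ideal (MvPolynomial (Fin n) K) :=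
  Ideal.span { p | ∃ f ∈ I, ∃ u, IsLeadExp lt f u ∧ p = monomial u 1 }

/-- `DistRel c u v ℓ` says that `u - v = ℓ·c` in `ℤⁿ`; then `d(x^u, x^v) = |ℓ|`. -/
def DistRel {n : ℕ} (c : Fin n → ℤ) (u v : Fin n →₀ ℕ) (ℓ : ℤ) : Prop :=
  ∀ i, (u i : ℤ) - (v i : ℤ) = ℓ * c i

/-- Two monomials have the same degree in the `ℤⁿ/ℤc`-grading iff `u - v ∈ ℤc`. -/
def SameDeg {n : ℕ} (c : Fin n → ℤ) (u v : Fin n →₀ ℕ) : Prop :=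
  ∃ ℓ : ℤ, DistRel c u v ℓ

/-- A polynomial is homogeneous for the `ℤⁿ/ℤc`-grading if all of its monomials
have the same degree. -/
def CHom {n : ℕ} {K : Type*} [Field K] (c : Fin n → ℤ) (f : MvPolynomial (Fin n) K) : Prop :=
  ∀ u ∈ f.support, ∀ v ∈ f.support, SameDeg c u v

/-- An ideal is homogeneous for the `ℤⁿ/ℤc`-grading if it is generated by homogeneous
elements. -/
def CHomIdeal {n : ℕ} {K : Type*} [Field K] (c : Fin n → ℤ)
    (I : Ideal (MvPolynomial (Fin n) K)) : Prop :=
  ∃ G : Set (MvPolynomial (Fin n) K), (∀ g ∈ G, CHom c g) ∧ I = Ideal.span G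

/-- The exponent vector `c⁺` of a vector `c ∈ ℤⁿ`. -/
noncomputable def cpos {n : ℕ} (c : Fin n → ℤ) : Fin n →₀ ℕ :=
  Finsupp.equivFunOnFinite.symm fun i => (c i).toNat

/-- The exponent vector `c⁻` of a vector `c ∈ ℤⁿ`. -/
noncomputable def cneg {n : ℕ} (c : Fin n → ℤ) : Fin n →₀ ℕ :=
  Finsupp.equivFunOnFinite.symm fun i => (-(c i)).toNat

/-- `Mon M`: the set of (exponents of) monomials lying in `M`. -/
def Mon {n : ℕ} {K : Type*} [Field K] (M : Ideal (MvPolynomial (Fin n) K)) :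
    Set (Fin n →₀ ℕ) :=
  { u | monomial u 1 ∈ M }

/-- `f` (as a map on exponent vectors) restricts to an arrow map `Mon M → Mon N`
with respect to the `ℤⁿ/ℤc`-grading and the term order `lt`:
(1) it is a degree-preserving bijection with `m ⪰ f(m)`;
(2) `d(m', f(m')) ≤ d(m, f(m))` for every multiple `m'` of `m ∈ Mon M`;
(3) `d(f⁻¹(m'), m') ≤ d(f⁻¹(m), m)` for every `m ∈ Mon N` and multiple `m'` of `m`. -/
def IsArrowMap {n : ℕ} {K : Type*} [Field K] (c : Fin n → ℤ)
    (lt : (Fin n →₀ ℕ) → (Fin n →₀ ℕ) → Prop)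
    (M N : Ideal (MvPolynomial (Fin n) K)) (f : (Fin n →₀ ℕ) → (Fin n →₀ ℕ)) : Prop :=
  Set.BijOn f (Mon M) (Mon N) ∧
  (∀ u ∈ Mon M, SameDeg c u (f u)) ∧
  (∀ u ∈ Mon M, f u = u ∨ lt (f u) u) ∧
  (∀ u ∈ Mon M, ∀ (w : Fin n →₀ ℕ) (ℓ ℓ' : ℤ),
    DistRel c u (f u) ℓ → DistRel c (u + w) (f (u + w)) ℓ' → |ℓ'| ≤ |ℓ|) ∧
  (∀ u ∈ Mon M, ∀ u' ∈ Mon M, ∀ (w : Fin n →₀ ℕ) (ℓ ℓ' : ℤ),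
    f u' = f u + w → DistRel c u (f u) ℓ → DistRel c u' (f u') ℓ' → |ℓ'| ≤ |ℓ|)

/-!
If `x_i^r ∈ in_≺(I)`, multiplying an element of `I` with leading monomial dividing `x_i^r`
by a monomial and then taking its homogeneous component of the degree of `x_i^r` gives a
homogeneous `g ∈ I` with leading monomial `x_i^r`. Every other monomial of `g` is `x^v` with
`v = r e_i + ℓc`, and `x^{c⁺} ≺ x^{c⁻}` forces `ℓ > 0`; as `v ≥ 0` and `c` has a negative
entry, that entry must be `c_i`. So `x_i^r ∈ I` or `c_i < 0`. The same argument for `≺'`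
and the grading vector `-c` gives `x_i^r ∈ I` or `c_i > 0`.
-/

namespace IsTermOrder

variable {n : ℕ} {lt : (Fin n →₀ ℕ) → (Fin n →₀ ℕ) → Prop}

lemma lt_asymm (hlt : IsTermOrder n lt) {a b : Fin n →₀ ℕ} (h : lt a b) : ¬ lt b a :=
  fun h' => hlt.2.2.1 a (hlt.2.1 a b a h h')

lemma add_lt_add_left (hlt : IsTermOrder n lt) {a b : Fin n →₀ ℕ} (h : lt a b)
    (w : Fin n →₀ ℕ) : lt (w + a) (w + b) := by
  simpa only [add_comm w] using hlt.2.2.2.2 a b w h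

lemma lt_of_add_lt_add_left (hlt : IsTermOrder n lt) {a b w : Fin n →₀ ℕ}
    (h : lt (w + a) (w + b)) : lt a b := by
  rcases hlt.1 a b with hab | rfl | hba
  · exact hab
  · exact absurd h (hlt.2.2.1 _)
  · exact absurd (hlt.add_lt_add_left hba w) (hlt.lt_asymm h)

lemma nsmul_lt_nsmul (hlt : IsTermOrder n lt) {a b : Fin n →₀ ℕ} (h : lt a b) {k : ℕ}
    (hk : k ≠ 0) : lt (k • a) (k • b) := by
  obtain ⟨k, rfl⟩ := Nat.exists_eq_succ_of_ne_zero hk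
  induction k with
  | zero => simpa only [Nat.succ_eq_add_one, zero_add, one_smul] using h
  | succ k ih =>
    rw [succ_nsmul _ (k + 1), succ_nsmul _ (k + 1)]
    exact hlt.2.1 _ _ _ (hlt.2.2.2.2 _ _ a (ih k.succ_ne_zero)) (hlt.add_lt_add_left h _)

end IsTermOrder

section Grading

variable {n : ℕ} {c : Fin n → ℤ}

lemma cpos_apply (c : Fin n → ℤ) (j : Fin n) : cpos c j = (c j).toNat := rfl

lemma cneg_apply (c : Fin n → ℤ) (j : Fin n) : cneg c j = (-c j).toNat := rfl

lemma cpos_neg (c : Fin n → ℤ) : cpos (-c) = cneg c := rfl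

lemma cneg_neg (c : Fin n → ℤ) : cneg (-c) = cpos c := by
  ext j
  rw [cpos_apply, cneg_apply, Pi.neg_apply, neg_neg]

lemma DistRel.neg {u v : Fin n →₀ ℕ} {ℓ : ℤ} (h : DistRel c u v ℓ) : DistRel (-c) u v (-ℓ) :=
  fun j => by rw [h j, Pi.neg_apply, neg_mul_neg]

lemma SameDeg.neg {u v : Fin n →₀ ℕ} (h : SameDeg c u v) : SameDeg (-c) u v :=
  let ⟨ℓ, hℓ⟩ := h
  ⟨-ℓ, hℓ.neg⟩

lemma DistRel.eq_of_zero {u v : Fin n →₀ ℕ} (h : DistRel c u v 0) : u = v := by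
  ext j
  have := h j
  rw [zero_mul, sub_eq_zero] at this
  exact_mod_cast this

lemma DistRel.add_nsmul_cpos_eq {u v : Fin n →₀ ℕ} {k : ℕ} (h : DistRel c u v (-k)) :
    u + k • cpos c = v + k • cneg c := by
  ext j
  simp only [Finsupp.coe_add, Finsupp.coe_smul, Pi.add_apply, Pi.smul_apply, smul_eq_mul,
    cpos_apply, cneg_apply]
  zify
  linear_combination h j + (k : ℤ) * Int.toNat_sub_toNat_neg (c j)

lemma DistRel.lt_zero_of_single {v : Fin n →₀ ℕ} {i : Fin n} {r : ℕ} {ℓ : ℤ}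
    (hcn : cneg c ≠ 0) (h : DistRel c v (Finsupp.single i r) ℓ) (hℓ : 0 < ℓ) : c i < 0 := by
  obtain ⟨k, hk⟩ := Finsupp.ne_iff.mp hcn
  rw [Finsupp.coe_zero, Pi.zero_apply, cneg_apply] at hk
  have hck : c k < 0 := by omega
  obtain rfl | hki := eq_or_ne k i
  · exact hck
  · have hvk := h k
    rw [Finsupp.single_eq_of_ne hki, Nat.cast_zero, sub_zero] at hvk
    nlinarith [(v k).cast_nonneg (α := ℤ)]

lemma IsTermOrder.lt_of_distRel_neg {lt : (Fin n →₀ ℕ) → (Fin n →₀ ℕ) → Prop}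
    (hlt : IsTermOrder n lt) (hlo : lt (cpos c) (cneg c))
    {u v : Fin n →₀ ℕ} {ℓ : ℤ} (h : DistRel c u v ℓ) (hℓ : ℓ < 0) : lt v u := by
  obtain ⟨k, hk⟩ : ∃ k : ℕ, ℓ = -k := ⟨ℓ.natAbs, by omega⟩
  subst hk
  have hk : k ≠ 0 := by omega
  have h' := hlt.add_lt_add_left (hlt.nsmul_lt_nsmul hlo hk) v
  rw [← h.add_nsmul_cpos_eq] at h'
  exact hlt.lt_of_add_lt_add_left (by simpa only [add_comm] using h')

end Grading

section Polynomial

variable {n : ℕ} {K : Type*} [Field K]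

/-- The weights realising the `ℤⁿ/ℤc`-grading: `x_j` has degree `e_j + ℤc`. -/
def gradingWeight (c : Fin n → ℤ) : Fin n → (Fin n → ℤ) ⧸ AddSubgroup.zmultiples c :=
  fun j => QuotientAddGroup.mk (Pi.single j 1)

lemma weight_gradingWeight (c : Fin n → ℤ) (u : Fin n →₀ ℕ) :
    Finsupp.weight (gradingWeight c) u = QuotientAddGroup.mk (fun j => (u j : ℤ)) := by
  induction u using Finsupp.induction_linear with
  | zero => rw [map_zero]; rfl
  | add u v hu hv => simp only [map_add, hu, hv, Finsupp.add_apply, Nat.cast_add]; rfl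
  | single s r =>
    rw [Finsupp.weight_single, gradingWeight, ← QuotientAddGroup.mk_nsmul]
    congr 1
    ext j
    simp [Finsupp.single_apply, Pi.single_apply, eq_comm]

lemma sameDeg_iff_weight_eq {c : Fin n → ℤ} {u v : Fin n →₀ ℕ} :
    SameDeg c u v ↔
      Finsupp.weight (gradingWeight c) u = Finsupp.weight (gradingWeight c) v := by
  rw [weight_gradingWeight, weight_gradingWeight, eq_comm, QuotientAddGroup.eq,
    AddSubgroup.mem_zmultiples_iff, SameDeg]
  refine exists_congr fun ℓ => ?_
  constructor
  · intro h
    funext j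
    have := h j
    simp only [Pi.smul_apply, Pi.add_apply, Pi.neg_apply, smul_eq_mul]
    linarith
  · intro h j
    have := congrFun h j
    simp only [Pi.smul_apply, Pi.add_apply, Pi.neg_apply, smul_eq_mul] at this
    linarith

lemma CHom.isHomogeneousElem {c : Fin n → ℤ} {g : MvPolynomial (Fin n) K} (hg : CHom c g) :
    SetLike.IsHomogeneousElem (weightedHomogeneousSubmodule K (gradingWeight c)) g := by
  rcases g.support.eq_empty_or_nonempty with h | ⟨u, hu⟩
  · exact ⟨0, by rw [support_eq_empty.mp h]; exact zero_mem _⟩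
  · exact ⟨_, (mem_weightedHomogeneousSubmodule _ _ _ _).mpr fun d hd =>
      sameDeg_iff_weight_eq.mp (hg d (mem_support_iff.mpr hd) u hu)⟩

lemma CHomIdeal.neg {c : Fin n → ℤ} {I : Ideal (MvPolynomial (Fin n) K)} (hI : CHomIdeal c I) :
    CHomIdeal (-c) I :=
  let ⟨G, hG, hIG⟩ := hI
  ⟨G, fun g hg u hu v hv => (hG g hg u hu v hv).neg, hIG⟩

attribute [local instance] MvPolynomial.weightedGradedAlgebra in
lemma CHomIdeal.weightedHomogeneousComponent_mem {c : Fin n → ℤ}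
    {I : Ideal (MvPolynomial (Fin n) K)} (hI : CHomIdeal c I) {f : MvPolynomial (Fin n) K}
    (hf : f ∈ I) (m : (Fin n → ℤ) ⧸ AddSubgroup.zmultiples c) :
    weightedHomogeneousComponent (gradingWeight c) m f ∈ I := by
  classical
  obtain ⟨G, hG, rfl⟩ := hI
  exact weightedHomogeneousComponent_mem_of_mem _ _
    (Ideal.homogeneous_span _ G fun g hg => (hG g hg).isHomogeneousElem) hf m

variable {lt : (Fin n →₀ ℕ) → (Fin n →₀ ℕ) → Prop}

lemma exists_isLeadExp_le_of_monomial_mem_initialIdeal {I : Ideal (MvPolynomial (Fin n) K)}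
    {δ : Fin n →₀ ℕ} (h : monomial δ (1 : K) ∈ initialIdeal lt I) :
    ∃ f ∈ I, ∃ u, IsLeadExp lt f u ∧ u ≤ δ := by
  classical
  obtain ⟨a, ha, hsum⟩ := Submodule.mem_span_set.mp h
  by_contra! hc
  have h0 : ∀ p ∈ a.support, coeff δ (a p • p) = 0 := by
    intro p hp
    obtain ⟨f, hfI, u, hu, rfl⟩ := ha hp
    rw [smul_eq_mul, coeff_mul_monomial', if_neg (hc f hfI u hu)]
  have h1 := congrArg (coeff δ) hsum
  rw [Finsupp.sum, coeff_sum, Finset.sum_eq_zero h0, coeff_monomial, if_pos rfl] at h1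
  exact zero_ne_one h1

lemma IsLeadExp.monomial_mul (hlt : IsTermOrder n lt) {f : MvPolynomial (Fin n) K}
    {u : Fin n →₀ ℕ} (hf : IsLeadExp lt f u) (w : Fin n →₀ ℕ) :
    IsLeadExp lt (monomial w (1 : K) * f) (w + u) := by
  refine ⟨?_, fun v hv hvu => ?_⟩
  · rw [mem_support_iff, coeff_monomial_mul, one_mul]
    exact mem_support_iff.mp hf.1
  · rw [mem_support_iff, coeff_monomial_mul'] at hv
    split_ifs at hv with hwv
    · rw [one_mul, ← mem_support_iff] at hv
      obtain ⟨v, rfl⟩ := exists_add_of_le hwv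
      rw [add_tsub_cancel_left] at hv
      exact hlt.add_lt_add_left (hf.2 v hv fun h => hvu (h ▸ rfl)) w
    · exact absurd rfl hv

lemma IsLeadExp.weightedHomogeneousComponent {M : Type*} [AddCommMonoid M] (w : Fin n → M)
    {f : MvPolynomial (Fin n) K} {u : Fin n →₀ ℕ} (hf : IsLeadExp lt f u) :
    IsLeadExp lt (weightedHomogeneousComponent w (Finsupp.weight w u) f) u := by
  classical
  rw [IsLeadExp, support_weightedHomogeneousComponent]
  exact ⟨Finset.mem_filter.mpr ⟨hf.1, rfl⟩, fun v hv => hf.2 v (Finset.mem_filter.mp hv).1⟩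

lemma exists_isLeadExp_sameDeg_of_monomial_mem_initialIdeal (hlt : IsTermOrder n lt)
    {c : Fin n → ℤ} {I : Ideal (MvPolynomial (Fin n) K)} (hI : CHomIdeal c I)
    {δ : Fin n →₀ ℕ} (h : monomial δ (1 : K) ∈ initialIdeal lt I) :
    ∃ g ∈ I, IsLeadExp lt g δ ∧ ∀ v ∈ g.support, SameDeg c v δ := by
  classical
  obtain ⟨f, hfI, u, hu, huδ⟩ := exists_isLeadExp_le_of_monomial_mem_initialIdeal h
  have hlead : IsLeadExp lt (monomial (δ - u) (1 : K) * f) δ := by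
    simpa only [tsub_add_cancel_of_le huδ] using hu.monomial_mul hlt (δ - u)
  refine ⟨_, hI.weightedHomogeneousComponent_mem (I.mul_mem_left _ hfI) _,
    hlead.weightedHomogeneousComponent _, fun v hv => ?_⟩
  rw [support_weightedHomogeneousComponent] at hv
  exact sameDeg_iff_weight_eq.mpr (Finset.mem_filter.mp hv).2

lemma monomial_one_mem_of_support_eq_singleton {I : Ideal (MvPolynomial (Fin n) K)}
    {g : MvPolynomial (Fin n) K} (hg : g ∈ I) {δ : Fin n →₀ ℕ} (h : g.support = {δ}) :
    monomial δ (1 : K) ∈ I := by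
  have ha : coeff δ g ≠ 0 := mem_support_iff.mp (h ▸ Finset.mem_singleton_self δ)
  have hg' : g = monomial δ (coeff δ g) := by
    ext w
    rw [coeff_monomial]
    split_ifs with hw
    · rw [hw]
    · exact notMem_support_iff.mp (h ▸ Finset.notMem_singleton.mpr (Ne.symm hw))
  have : C (coeff δ g)⁻¹ * g = monomial δ (1 : K) := by
    rw [hg', C_mul_monomial, coeff_monomial, if_pos rfl, inv_mul_cancel₀ ha]
  exact this ▸ I.mul_mem_left _ hg

lemma IsLeadExp.distRel_pos (hlt : IsTermOrder n lt) {c : Fin n → ℤ}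
    (hlo : lt (cpos c) (cneg c)) {g : MvPolynomial (Fin n) K} {δ v : Fin n →₀ ℕ}
    (hg : IsLeadExp lt g δ) (hv : v ∈ g.support) (hvδ : v ≠ δ) {ℓ : ℤ}
    (h : DistRel c v δ ℓ) : 0 < ℓ := by
  rcases lt_trichotomy ℓ 0 with hℓ | rfl | hℓ
  · exact absurd (hg.2 v hv hvδ) (hlt.lt_asymm (hlt.lt_of_distRel_neg hlo h hℓ))
  · exact absurd h.eq_of_zero hvδ
  · exact hℓ

theorem monomial_single_mem_or_lt_zero (hlt : IsTermOrder n lt) {c : Fin n → ℤ}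
    (hcn : cneg c ≠ 0) (hlo : lt (cpos c) (cneg c)) {I : Ideal (MvPolynomial (Fin n) K)}
    (hI : CHomIdeal c I) {i : Fin n} {r : ℕ}
    (h : monomial (Finsupp.single i r) (1 : K) ∈ initialIdeal lt I) :
    monomial (Finsupp.single i r) (1 : K) ∈ I ∨ c i < 0 := by
  obtain ⟨g, hgI, hlead, hdeg⟩ := exists_isLeadExp_sameDeg_of_monomial_mem_initialIdeal hlt hI h
  by_cases hsupp : g.support = {Finsupp.single i r}
  · exact Or.inl (monomial_one_mem_of_support_eq_singleton hgI hsupp)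
  · obtain ⟨v, hv, hvδ⟩ : ∃ v ∈ g.support, v ≠ Finsupp.single i r := by
      by_contra! hall
      exact hsupp (Finset.eq_singleton_iff_unique_mem.mpr ⟨hlead.1, hall⟩)
    obtain ⟨ℓ, hℓ⟩ := hdeg v hv
    exact Or.inr (hℓ.lt_zero_of_single hcn (hlead.distRel_pos hlt hlo hv hvδ hℓ))

end Polynomial

theorem pow_mem_of_mem_both_initial_ideals_general {n : ℕ} {K : Type*} [Field K] (c : Fin n → ℤ)
    (hcp : cpos c ≠ 0) (hcn : cneg c ≠ 0)
    (lt lt' : (Fin n →₀ ℕ) → (Fin n →₀ ℕ) → Prop)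
    (hlt : IsTermOrder n lt) (hlt' : IsTermOrder n lt')
    (hlo : lt (cpos c) (cneg c)) (hlo' : lt' (cneg c) (cpos c))
    (I : Ideal (MvPolynomial (Fin n) K)) (hI : CHomIdeal c I)
    (M N : Ideal (MvPolynomial (Fin n) K))
    (hM : M = initialIdeal lt I) (hN : N = initialIdeal lt' I)
    (i : Fin n) (r : ℕ)
    (hMm : (monomial (Finsupp.single i r) (1 : K)) ∈ M)
    (hNm : (monomial (Finsupp.single i r) (1 : K)) ∈ N) :
    (monomial (Finsupp.single i r) (1 : K)) ∈ I := by
  subst hM hN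
  rcases monomial_single_mem_or_lt_zero hlt hcn hlo hI hMm with hmem | hci
  · exact hmem
  have hlo'' : lt' (cpos (-c)) (cneg (-c)) := by rwa [cpos_neg, cneg_neg]
  rcases monomial_single_mem_or_lt_zero hlt' (by rwa [cneg_neg]) hlo'' hI.neg hNm
    with hmem | hci'
  · exact hmem
  · exact absurd hci (not_lt.mpr (neg_neg_iff_pos.mp hci').le)

/-- If `x_i^r` lies in both initial ideals `M = in_≺(I)` and
`N = in_≺'(I)` of a `ℤⁿ/ℤc`-homogeneous ideal `I` (for a positive grading), then
`x_i^r ∈ I`. -/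
theorem pow_mem_of_mem_both_initial_ideals {n : ℕ} {K : Type*} [Field K] (c : Fin n → ℤ)
    (hcp : cpos c ≠ 0) (hcn : cneg c ≠ 0)
    (lt lt' : (Fin n →₀ ℕ) → (Fin n →₀ ℕ) → Prop)
    (hlt : IsTermOrder n lt) (hlt' : IsTermOrder n lt')
    (hlo : lt (cpos c) (cneg c)) (hlo' : lt' (cneg c) (cpos c))
    (I : Ideal (MvPolynomial (Fin n) K)) (hI : CHomIdeal c I)
    (M N : Ideal (MvPolynomial (Fin n) K))
    (hM : M = initialIdeal lt I) (hN : N = initialIdeal lt' I)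
    (i : Fin n) (r : ℕ) (hr : 1 ≤ r)
    (hMm : (monomial (Finsupp.single i r) (1 : K)) ∈ M)
    (hNm : (monomial (Finsupp.single i r) (1 : K)) ∈ N) :
    (monomial (Finsupp.single i r) (1 : K)) ∈ I :=
  pow_mem_of_mem_both_initial_ideals_general c hcp hcn lt lt' hlt hlt' hlo hlo' I hI M N hM hN i r
    hMm hNm
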